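/- arXiv:1207.6695 — 2 statements merged into one kernel-verified Lean document; each statement's English description precedes it below -/
import Mathlib

section
/- Let r > 0, α ≥ 0 and ε > 0 be real numbers, and let φ be a Schwartz function on ℝˡ whose support is contained in {x ∈ ℝˡ : |x| ≥ α + ε}. For each nonnegative integer j, the function g_j(x) = ((α² + r²)/(|x|² + r²))^j φ(x) is again a Schwartz function, and g_j → 0 in the Schwartz topology as j → ∞; that is, for every Schwartz seminorm μ_{β,τ} one has μ_{β,τ}(g_j) → 0 as j → ∞. -/
open MeasureTheory SchwartzMap Filter Set

section Aux

variable {E : Type} [NormedAddCommGroup E] [InnerProductSpace ℝ E]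

lemma id_iter_ge_two (k : ℕ) (hk : 2 ≤ k) (x : E) :
    iteratedFDeriv ℝ k (fun y : E => y) x = 0 := by
  obtain ⟨m, rfl⟩ : ∃ m, k = m + 1 := ⟨k-1, by omega⟩
  have h1 : iteratedFDeriv ℝ m (fderiv ℝ (fun y : E => y)) x = 0 := by
    have : (fderiv ℝ (fun y : E => y)) = fun _ : E => ContinuousLinearMap.id ℝ E := by
      funext z; simp [fderiv_id']
    rw [this, iteratedFDeriv_const_of_ne (by omega)]
    rfl
  have := norm_iteratedFDeriv_fderiv (𝕜 := ℝ) (f := fun y : E => y) (n := m) (x := x)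
  rw [h1] at this
  simp only [norm_zero] at this
  exact norm_eq_zero.mp this.symm

lemma id_iter_one_le (x : E) : ‖iteratedFDeriv ℝ 1 (fun y : E => y) x‖ ≤ 1 := by
  have := norm_iteratedFDeriv_fderiv (𝕜 := ℝ) (f := fun y : E => y) (n := 0) (x := x)
  rw [← this, norm_iteratedFDeriv_zero, fderiv_id']
  exact ContinuousLinearMap.norm_id_le

lemma id_iter_le (k : ℕ) (x : E) : ‖iteratedFDeriv ℝ k (fun y : E => y) x‖ ≤ 1 + ‖x‖ := by
  match k with
  | 0 => rw [norm_iteratedFDeriv_zero]; linarith [norm_nonneg x]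
  | 1 => linarith [id_iter_one_le x, norm_nonneg x]
  | (m+2) => rw [id_iter_ge_two (m+2) (by omega) x, norm_zero]; positivity

lemma normsq_iter_bound (R : ℝ) (x : E) (i : ℕ) (hi : 1 ≤ i) :
    ‖iteratedFDeriv ℝ i (fun y : E => ‖y‖^2 + R) x‖ ≤ (2 + 2*‖x‖)^i := by
  have hns : ContDiff ℝ (⊤ : ℕ∞) (fun y : E => ‖y‖^2) := contDiff_norm_sq ℝ
  have hadd : iteratedFDeriv ℝ i (fun y : E => ‖y‖^2 + R) x
      = iteratedFDeriv ℝ i (fun y : E => ‖y‖^2) x := by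
    have h0 := iteratedFDeriv_add_apply (i := i) (f := fun y : E => ‖y‖^2)
      (g := fun _ : E => R) (x := x) (hns.of_le (mod_cast le_top)).contDiffAt contDiff_const.contDiffAt
    have hc : iteratedFDeriv ℝ i (fun _ : E => R) x = 0 := by
      rw [iteratedFDeriv_const_of_ne (by omega)]; rfl
    rw [hc, add_zero] at h0; exact h0
  rw [hadd]
  have hfun : (fun y : E => ‖y‖^2) = fun y : E => (innerSL ℝ) y y := by
    funext y; rw [innerSL_apply_apply, real_inner_self_eq_norm_sq]
  rw [hfun]
  have hbil := ContinuousLinearMap.norm_iteratedFDeriv_le_of_bilinear (innerSL ℝ)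
    (f := fun y : E => y) (g := fun y : E => y) contDiff_id contDiff_id x (n := i) (mod_cast le_top)
  refine hbil.trans ?_
  have hB : ‖innerSL ℝ (E := E)‖ ≤ 1 := norm_innerSL_le ℝ
  have hnx : (0:ℝ) ≤ ‖x‖ := norm_nonneg x
  rcases eq_or_lt_of_le hi with h1 | h2
  · -- i = 1
    rw [← h1]
    have : ∑ k ∈ Finset.range 2, ((1:ℕ).choose k : ℝ) *
        ‖iteratedFDeriv ℝ k (fun y : E => y) x‖ * ‖iteratedFDeriv ℝ (1-k) (fun y : E => y) x‖
        ≤ 2 * ‖x‖ := by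
      rw [Finset.sum_range_succ, Finset.sum_range_one]
      simp only [Nat.choose_self, Nat.choose_zero_right, Nat.cast_one, one_mul]
      have e0 : ‖iteratedFDeriv ℝ 0 (fun y : E => y) x‖ = ‖x‖ := norm_iteratedFDeriv_zero
      have e1 := id_iter_one_le x
      rw [show (1:ℕ)-1 = 0 from rfl, show (1:ℕ)-0 = 1 from rfl] at *
      rw [e0]
      nlinarith [norm_nonneg (iteratedFDeriv ℝ 1 (fun y : E => y) x)]
    calc ‖innerSL ℝ (E := E)‖ * ∑ k ∈ Finset.range (1 + 1), ((1:ℕ).choose k : ℝ) *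
        ‖iteratedFDeriv ℝ k (fun y : E => y) x‖ * ‖iteratedFDeriv ℝ (1-k) (fun y : E => y) x‖
        ≤ 1 * (2*‖x‖) := by
          apply mul_le_mul hB this (by positivity) zero_le_one
      _ ≤ (2 + 2*‖x‖)^1 := by rw [pow_one]; linarith
  · -- 2 ≤ i
    have hsum : ∑ k ∈ Finset.range (i + 1), ((i:ℕ).choose k : ℝ) *
        ‖iteratedFDeriv ℝ k (fun y : E => y) x‖ * ‖iteratedFDeriv ℝ (i-k) (fun y : E => y) x‖
        ≤ ∑ k ∈ Finset.range (i + 1), ((i:ℕ).choose k : ℝ) * ((1+‖x‖) * (1+‖x‖)) := by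
      apply Finset.sum_le_sum
      intro k _
      rw [mul_assoc]
      apply mul_le_mul_of_nonneg_left _ (by positivity)
      exact mul_le_mul (id_iter_le k x) (id_iter_le (i-k) x) (norm_nonneg _) (by positivity)
    have hsum2 : ∑ k ∈ Finset.range (i + 1), ((i:ℕ).choose k : ℝ) * ((1+‖x‖) * (1+‖x‖))
        = 2^i * ((1+‖x‖) * (1+‖x‖)) := by
      rw [← Finset.sum_mul]
      norm_cast
      rw [Nat.sum_range_choose]
    calc ‖innerSL ℝ (E := E)‖ * ∑ k ∈ Finset.range (i + 1), ((i:ℕ).choose k : ℝ) *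
        ‖iteratedFDeriv ℝ k (fun y : E => y) x‖ * ‖iteratedFDeriv ℝ (i-k) (fun y : E => y) x‖
        ≤ 1 * (2^i * ((1+‖x‖) * (1+‖x‖))) := by
          apply mul_le_mul hB (hsum.trans (le_of_eq hsum2)) ?_ zero_le_one
          · apply Finset.sum_nonneg; intro k _; positivity
      _ ≤ (2 + 2*‖x‖)^i := by
          rw [one_mul]
          have : (2 + 2*‖x‖)^i = 2^i * (1+‖x‖)^i := by
            rw [← mul_pow]; ring_nf
          rw [this]
          apply mul_le_mul_of_nonneg_left _ (by positivity)
          calc (1+‖x‖) * (1+‖x‖) = (1+‖x‖)^2 := (sq (1+‖x‖)).symm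
            _ ≤ (1+‖x‖)^i := pow_le_pow_right₀ (by linarith) h2

lemma inv_normsq_temperate (R : ℝ) (hR : 0 < R) :
    Function.HasTemperateGrowth (fun x : E => (‖x‖^2 + R)⁻¹) := by
  have hq : ContDiff ℝ ((⊤:ℕ∞) : WithTop ℕ∞) (fun y : E => ‖y‖^2 + R) :=
    (contDiff_norm_sq ℝ).add contDiff_const
  have hqx : ∀ x : E, (0:ℝ) < ‖x‖^2 + R := fun x => by positivity
  constructor
  · exact hq.inv (fun x => (hqx x).ne')
  · intro n
    set C : ℝ := (Nat.factorial n : ℝ) * (max 1 R⁻¹)^(n+1) with hC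
    have hC0 : 0 ≤ C := by positivity
    refine ⟨n, (Nat.factorial n : ℝ) * C * 2^n, fun x => ?_⟩
    have hmem : (‖x‖^2 + R) ∈ Ioi (R/2) := by
      simp only [mem_Ioi]; nlinarith [sq_nonneg ‖x‖]
    have hcomp := norm_iteratedFDerivWithin_comp_le (𝕜 := ℝ)
      (g := Inv.inv) (f := fun y : E => ‖y‖^2 + R) (n := n) (s := (univ : Set E))
      (t := Ioi (R/2)) (x := x) (N := ((⊤:ℕ∞) : WithTop ℕ∞))
      ((contDiffOn_inv ℝ).mono (fun y hy => by
        simp only [mem_compl_iff, mem_singleton_iff]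
        have : R/2 < y := hy
        intro h; rw [h] at this; linarith))
      hq.contDiffOn (WithTop.coe_le_coe.mpr (mod_cast le_top)) (isOpen_Ioi.uniqueDiffOn) uniqueDiffOn_univ
      (fun y _ => by
        simp only [mem_Ioi]; nlinarith [sq_nonneg ‖y‖])
      (mem_univ x) (C := C) (D := 2 + 2*‖x‖)
      (fun i hi => ?_) (fun i hi1 hin => ?_)
    · rw [iteratedFDerivWithin_univ] at hcomp
      have hco : (Inv.inv ∘ fun y : E => ‖y‖^2 + R) = fun y : E => (‖y‖^2 + R)⁻¹ := rfl
      rw [hco] at hcomp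
      refine hcomp.trans ?_
      have h2 : ((2:ℝ) + 2*‖x‖)^n = 2^n * (1+‖x‖)^n := by rw [← mul_pow]; ring_nf
      rw [h2]
      calc (Nat.factorial n : ℝ) * C * (2^n * (1+‖x‖)^n)
          = ((Nat.factorial n : ℝ) * C * 2^n) * (1+‖x‖)^n := by ring
        _ ≤ ((Nat.factorial n : ℝ) * C * 2^n) * (1+‖x‖)^n := le_refl _
    · -- bound on derivative of Inv.inv within Ioi at q x
      rw [iteratedFDerivWithin_of_isOpen i isOpen_Ioi hmem,
        norm_iteratedFDeriv_eq_norm_iteratedDeriv, iteratedDeriv_eq_iterate, iter_deriv_inv]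
      set t := ‖x‖^2 + R with ht
      have htR : R ≤ t := by nlinarith [sq_nonneg ‖x‖]
      have ht0 : (0:ℝ) < t := hqx x
      rw [norm_mul]
      have h1 : ‖((-1:ℝ) ^ i * (Nat.factorial i : ℝ))‖ ≤ (Nat.factorial n : ℝ) := by
        rw [norm_mul, norm_pow, norm_neg, norm_one, one_pow, one_mul, Real.norm_natCast]
        exact_mod_cast Nat.factorial_le hi
      have _h1old : ‖∏ i' ∈ Finset.range i, (-1 - (i':ℝ))‖ ≤ (Nat.factorial n : ℝ) := by
        rw [norm_prod]
        have e : ∀ j ∈ Finset.range i, ‖(-1 - (j:ℝ))‖ = ((j+1 : ℕ) : ℝ) := by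
          intro j _
          have : (-1 - (j:ℝ)) = -(((j+1:ℕ):ℝ)) := by push_cast; ring
          rw [this, norm_neg, Real.norm_eq_abs, abs_of_nonneg (by positivity)]
        rw [Finset.prod_congr rfl e]
        have : ∏ j ∈ Finset.range i, ((j+1 : ℕ) : ℝ) = ((Nat.factorial i : ℕ) : ℝ) := by
          rw [← Nat.cast_prod]
          norm_cast
          exact Finset.prod_range_add_one_eq_factorial i
        rw [this]
        exact_mod_cast Nat.factorial_le hi
      have h2 : ‖t ^ (-1 - (i:ℤ))‖ ≤ (max 1 R⁻¹)^(n+1) := by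
        rw [Real.norm_eq_abs, abs_of_pos (zpow_pos ht0 _)]
        have e1 : t ^ (-1 - (i:ℤ)) = (t ^ (i+1 : ℕ))⁻¹ := by
          rw [show (-1 - (i:ℤ)) = -((i+1 : ℕ) : ℤ) by push_cast; ring, zpow_neg, zpow_natCast]
        rw [e1]
        have h3 : (R ^ (i+1:ℕ))⁻¹ ≤ (max 1 R⁻¹)^(n+1) := by
          rw [← inv_pow]
          calc (R⁻¹)^(i+1) ≤ (max 1 R⁻¹)^(i+1) := by
                apply pow_le_pow_left₀ (by positivity) (le_max_right _ _)
            _ ≤ (max 1 R⁻¹)^(n+1) := by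
                apply pow_le_pow_right₀ (le_max_left _ _) (by omega)
        refine le_trans ?_ h3
        apply inv_anti₀ (by positivity)
        exact pow_le_pow_left₀ hR.le htR _
      calc ‖((-1:ℝ) ^ i * (Nat.factorial i : ℝ))‖ * ‖t ^ (-1 - (i:ℤ))‖
          ≤ (Nat.factorial n : ℝ) * (max 1 R⁻¹)^(n+1) :=
            mul_le_mul h1 h2 (norm_nonneg _) (by positivity)
        _ = C := hC.symm
    · rw [iteratedFDerivWithin_univ]
      exact normsq_iter_bound R x i hi1

end Aux

section Aux2

variable {E : Type} [NormedAddCommGroup E] [NormedSpace ℝ E]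
variable {F : Type} [NormedAddCommGroup F] [NormedSpace ℝ F]

lemma my_htg_mul {f g : E → ℝ} (hf : Function.HasTemperateGrowth f)
    (hg : Function.HasTemperateGrowth g) :
    Function.HasTemperateGrowth (fun x => f x * g x) := by
  refine ⟨hf.1.mul hg.1, fun n => ?_⟩
  obtain ⟨k1, C1, hC1, h1⟩ := hf.norm_iteratedFDeriv_le_uniform n
  obtain ⟨k2, C2, hC2, h2⟩ := hg.norm_iteratedFDeriv_le_uniform n
  refine ⟨k1 + k2, 2^n * (C1 * C2), fun x => ?_⟩
  have hb := norm_iteratedFDeriv_mul_le (𝕜 := ℝ) hf.1 hg.1 x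
    (n := n) (by exact_mod_cast le_top)
  refine hb.trans ?_
  have hsum : ∑ i ∈ Finset.range (n + 1), (n.choose i : ℝ) *
      ‖iteratedFDeriv ℝ i f x‖ * ‖iteratedFDeriv ℝ (n - i) g x‖
      ≤ ∑ i ∈ Finset.range (n + 1), (n.choose i : ℝ) *
      (C1 * (1 + ‖x‖)^k1 * (C2 * (1 + ‖x‖)^k2)) := by
    apply Finset.sum_le_sum
    intro i hi
    rw [mul_assoc]
    apply mul_le_mul_of_nonneg_left _ (by positivity)
    exact mul_le_mul (h1 i (by simp at hi; omega) x) (h2 (n-i) (by omega) x)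
      (norm_nonneg _) (by positivity)
  refine hsum.trans (le_of_eq ?_)
  rw [← Finset.sum_mul]
  have : ∑ i ∈ Finset.range (n+1), (n.choose i : ℝ) = 2^n := by
    norm_cast; rw [Nat.sum_range_choose]
  rw [this, pow_add]; ring

lemma my_htg_pow {f : E → ℝ} (h : Function.HasTemperateGrowth f) (j : ℕ) :
    Function.HasTemperateGrowth (fun x => f x ^ j) := by
  induction j with
  | zero => simpa using Function.HasTemperateGrowth.const (1:ℝ)
  | succ m ih =>
    have := my_htg_mul h ih
    refine ⟨?_, ?_⟩
    · have e : (fun x => f x ^ (m+1)) = fun x => f x * f x ^ m := by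
        funext x; ring
      rw [e]; exact this.1
    · intro n
      obtain ⟨k, C, hC⟩ := this.2 n
      refine ⟨k, C, fun x => ?_⟩
      have e : (fun x => f x ^ (m+1)) = fun x => f x * f x ^ m := by
        funext x; ring
      rw [e]; exact hC x

lemma my_htg_fderiv {f : E → F} (h : Function.HasTemperateGrowth f) :
    Function.HasTemperateGrowth (fderiv ℝ f) := by
  refine ⟨?_, fun n => ?_⟩
  · exact h.1.fderiv_right (by exact_mod_cast le_top)
  · obtain ⟨k, C, hC⟩ := h.2 (n+1)
    exact ⟨k, C, fun x => by rw [norm_iteratedFDeriv_fderiv]; exact hC x⟩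

lemma my_seminorm_succ (k n : ℕ) (f : 𝓢(E, F)) :
    SchwartzMap.seminorm ℝ k (n+1) f = SchwartzMap.seminorm ℝ k n (fderivCLM ℝ E F f) := by
  have hco : ⇑(fderivCLM ℝ E F f) = fderiv ℝ ⇑f := rfl
  apply le_antisymm
  · apply seminorm_le_bound ℝ k (n+1) f (apply_nonneg _ _)
    intro x
    rw [← norm_iteratedFDeriv_fderiv, ← hco]
    exact le_seminorm ℝ k n (fderivCLM ℝ E F f) x
  · apply seminorm_le_bound ℝ k n (fderivCLM ℝ E F f) (apply_nonneg _ _)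
    intro x
    rw [hco, norm_iteratedFDeriv_fderiv]
    exact le_seminorm ℝ k (n+1) f x

lemma my_htg_const_mul {f : E → ℝ} (h : Function.HasTemperateGrowth f) (A : ℝ) :
    Function.HasTemperateGrowth (fun x => A * f x) :=
  my_htg_mul (Function.HasTemperateGrowth.const A) h
lemma my_hasFDerivAt_pow (m : E → ℝ) (hm : Differentiable ℝ m) (j : ℕ) (x : E) :
    HasFDerivAt (fun y => m y ^ (j+1)) ((((j:ℝ)+1) * m x ^ j) • fderiv ℝ m x) x := by
  induction j with
  | zero => simpa using (hm x).hasFDerivAt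
  | succ i ih =>
    have h2 : (fun y => m y ^ (i+2)) = fun y => m y * m y ^ (i+1) := by
      funext y; ring
    rw [h2]
    have := (hm x).hasFDerivAt.mul ih
    refine this.congr_fderiv ?_
    ext v
    simp only [ContinuousLinearMap.add_apply, ContinuousLinearMap.smul_apply, smul_eq_mul]
    push_cast
    ring

theorem my_master {E : Type} [NormedAddCommGroup E] [NormedSpace ℝ E]
    (m : E → ℝ) (hmf : Function.HasTemperateGrowth m)
    (hm : ∀ j : ℕ, Function.HasTemperateGrowth (fun x => m x ^ j))
    (hdm : Function.HasTemperateGrowth (fderiv ℝ m))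
    (S : Set E) (c : ℝ) (hc0 : 0 < c) (hmc : ∀ x ∈ S, |m x| ≤ c) :
    ∀ (n : ℕ) {F : Type} [NormedAddCommGroup F] [NormedSpace ℝ F] (k : ℕ)
      (ψ : 𝓢(E, F)), tsupport ⇑ψ ⊆ S →
      ∃ C : ℝ, 0 ≤ C ∧ ∀ j : ℕ,
        SchwartzMap.seminorm ℝ k n
          (SchwartzMap.bilinLeftCLM (ContinuousLinearMap.lsmul ℝ ℝ).flip (hm j) ψ)
          ≤ C * ((j:ℝ)+1)^n * c^j := by
  intro n
  induction n with
  | zero =>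
    intro F _ _ k ψ hψ
    refine ⟨SchwartzMap.seminorm ℝ k 0 ψ, apply_nonneg _ _, fun j => ?_⟩
    apply seminorm_le_bound ℝ k 0 _ (by positivity)
    intro x
    rw [norm_iteratedFDeriv_zero]
    have happ : (SchwartzMap.bilinLeftCLM (ContinuousLinearMap.lsmul ℝ ℝ).flip (hm j) ψ) x
        = m x ^ j • ψ x := rfl
    rw [happ]
    by_cases hx : x ∈ tsupport ⇑ψ
    · have h1 : ‖m x ^ j • ψ x‖ ≤ c^j * ‖ψ x‖ := by
        rw [norm_smul, Real.norm_eq_abs, abs_pow]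
        exact mul_le_mul_of_nonneg_right
          (pow_le_pow_left₀ (abs_nonneg _) (hmc x (hψ hx)) j) (norm_nonneg _)
      calc ‖x‖^k * ‖m x ^ j • ψ x‖ ≤ ‖x‖^k * (c^j * ‖ψ x‖) :=
            mul_le_mul_of_nonneg_left h1 (by positivity)
        _ = c^j * (‖x‖^k * ‖ψ x‖) := by ring
        _ ≤ c^j * SchwartzMap.seminorm ℝ k 0 ψ :=
            mul_le_mul_of_nonneg_left (norm_pow_mul_le_seminorm ℝ ψ k x) (by positivity)
        _ = SchwartzMap.seminorm ℝ k 0 ψ * ((j:ℝ)+1)^0 * c^j := by ring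
    · have : ψ x = 0 := image_eq_zero_of_notMem_tsupport hx
      rw [this, smul_zero, norm_zero, mul_zero]
      have : (0:ℝ) ≤ SchwartzMap.seminorm ℝ k 0 ψ := apply_nonneg _ _
      positivity
  | succ n IH =>
    intro F _ _ k ψ hψ
    set χ : 𝓢(E, E →L[ℝ] F) :=
      SchwartzMap.bilinLeftCLM (ContinuousLinearMap.smulRightL ℝ E F).flip hdm ψ with hχ
    have hχsupp : tsupport ⇑χ ⊆ S := by
      refine subset_trans ?_ hψ
      apply closure_minimal _ (isClosed_closure)
      intro x hx
      simp only [Function.mem_support] at hx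
      apply subset_closure
      simp only [Function.mem_support]
      intro h0
      apply hx
      have : χ x = (fderiv ℝ m x).smulRight (ψ x) := rfl
      rw [this, h0]
      ext v; simp
    have hdsupp : tsupport ⇑(fderivCLM ℝ E F ψ) ⊆ S := by
      refine subset_trans ?_ hψ
      have : ⇑(fderivCLM ℝ E F ψ) = fderiv ℝ ⇑ψ := rfl
      rw [this]
      exact tsupport_fderiv_subset ℝ
    obtain ⟨C1, hC1, hb1⟩ := IH k χ hχsupp
    obtain ⟨C2, hC2, hb2⟩ := IH k (fderivCLM ℝ E F ψ) hdsupp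
    refine ⟨SchwartzMap.seminorm ℝ k (n+1) ψ + (C1/c + C2), by positivity, fun j => ?_⟩
    have hsem0 : (0:ℝ) ≤ SchwartzMap.seminorm ℝ k (n+1) ψ := apply_nonneg _ _
    match j with
    | 0 =>
      have he : (SchwartzMap.bilinLeftCLM (ContinuousLinearMap.lsmul ℝ ℝ).flip (hm 0) ψ) = ψ := by
        apply SchwartzMap.ext; intro x
        show m x ^ 0 • ψ x = ψ x
        rw [pow_zero, one_smul]
      rw [he]
      push_cast
      have h1 : ((0:ℝ)+1)^(n+1) = 1 := by norm_num
      rw [h1, pow_zero]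
      have : (0:ℝ) ≤ C1/c + C2 := by positivity
      linarith
    | (j+1) =>
      -- derivative identity
      have hkey : fderivCLM ℝ E F
          (SchwartzMap.bilinLeftCLM (ContinuousLinearMap.lsmul ℝ ℝ).flip (hm (j+1)) ψ)
          = (((j:ℝ)+1) : ℝ) •
              (SchwartzMap.bilinLeftCLM (ContinuousLinearMap.lsmul ℝ ℝ).flip (hm j) χ)
            + SchwartzMap.bilinLeftCLM (ContinuousLinearMap.lsmul ℝ ℝ).flip (hm (j+1))
                (fderivCLM ℝ E F ψ) := by
        apply SchwartzMap.ext; intro x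
        have hL : (fderivCLM ℝ E F
            (SchwartzMap.bilinLeftCLM (ContinuousLinearMap.lsmul ℝ ℝ).flip (hm (j+1)) ψ)) x
            = fderiv ℝ (fun y => m y ^ (j+1) • ψ y) x := rfl
        rw [hL]
        have hmd : Differentiable ℝ m := hmf.1.differentiable (by simp)
        have hdiff : DifferentiableAt ℝ (fun y => m y ^ (j+1)) x :=
          (my_hasFDerivAt_pow m hmd j x).differentiableAt
        have hR : ((((j:ℝ)+1) : ℝ) •
              (SchwartzMap.bilinLeftCLM (ContinuousLinearMap.lsmul ℝ ℝ).flip (hm j) χ)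
            + SchwartzMap.bilinLeftCLM (ContinuousLinearMap.lsmul ℝ ℝ).flip (hm (j+1))
                (fderivCLM ℝ E F ψ)) x
            = ((j:ℝ)+1) • (m x ^ j • ((fderiv ℝ m x).smulRight (ψ x)))
              + m x ^ (j+1) • fderiv ℝ (⇑ψ) x := rfl
        rw [hR, fderiv_fun_smul hdiff ψ.differentiableAt,
          (my_hasFDerivAt_pow m hmd j x).fderiv]
        ext v
        simp only [ContinuousLinearMap.add_apply, ContinuousLinearMap.smul_apply,
          ContinuousLinearMap.smulRight_apply]
        match_scalars <;> (try push_cast) <;> (try simp only [smul_eq_mul]) <;> (try ring) <;> (try rfl)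
      -- seminorm estimate
      rw [my_seminorm_succ k n _, hkey]
      refine le_trans (map_add_le_add (SchwartzMap.seminorm ℝ k n) _ _) ?_
      rw [map_smul_eq_mul]
      have habs : ‖(((j:ℝ)+1) : ℝ)‖ = (j:ℝ)+1 := by
        rw [Real.norm_eq_abs, abs_of_nonneg (by positivity)]
      rw [habs]
      have hb1' := hb1 j
      have hb2' := hb2 (j+1)
      push_cast at hb2' ⊢
      have e1 : ((j:ℝ)+1) * (C1 * ((j:ℝ)+1)^n * c^j)
          = (C1/c) * (((j:ℝ)+1)^(n+1) * c^(j+1)) := by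
        field_simp
        ring
      have t1 : ((j:ℝ)+1) * SchwartzMap.seminorm ℝ k n
            (SchwartzMap.bilinLeftCLM (ContinuousLinearMap.lsmul ℝ ℝ).flip (hm j) χ)
          ≤ (C1/c) * (((j:ℝ)+1+1)^(n+1) * c^(j+1)) := by
        calc ((j:ℝ)+1) * SchwartzMap.seminorm ℝ k n
              (SchwartzMap.bilinLeftCLM (ContinuousLinearMap.lsmul ℝ ℝ).flip (hm j) χ)
            ≤ ((j:ℝ)+1) * (C1 * ((j:ℝ)+1)^n * c^j) := by
              apply mul_le_mul_of_nonneg_left hb1' (by positivity)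
          _ = (C1/c) * (((j:ℝ)+1)^(n+1) * c^(j+1)) := e1
          _ ≤ (C1/c) * (((j:ℝ)+1+1)^(n+1) * c^(j+1)) := by
              apply mul_le_mul_of_nonneg_left _ (by positivity)
              apply mul_le_mul_of_nonneg_right _ (by positivity)
              apply pow_le_pow_left₀ (by positivity) (by linarith)
      have t2 : SchwartzMap.seminorm ℝ k n
            (SchwartzMap.bilinLeftCLM (ContinuousLinearMap.lsmul ℝ ℝ).flip (hm (j+1))
              (fderivCLM ℝ E F ψ))
          ≤ C2 * (((j:ℝ)+1+1)^(n+1) * c^(j+1)) := by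
        calc SchwartzMap.seminorm ℝ k n
              (SchwartzMap.bilinLeftCLM (ContinuousLinearMap.lsmul ℝ ℝ).flip (hm (j+1))
                (fderivCLM ℝ E F ψ))
            ≤ C2 * ((j:ℝ)+1+1)^n * c^(j+1) := hb2'
          _ = C2 * (((j:ℝ)+1+1)^n * c^(j+1)) := by ring
          _ ≤ C2 * (((j:ℝ)+1+1)^(n+1) * c^(j+1)) := by
              apply mul_le_mul_of_nonneg_left _ hC2
              apply mul_le_mul_of_nonneg_right _ (by positivity)
              exact pow_le_pow_right₀ (by linarith [Nat.cast_nonneg (α := ℝ) j]) (Nat.le_succ n)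
      have hfin : (0:ℝ) ≤ ((j:ℝ)+1+1)^(n+1) * c^(j+1) := by positivity
      calc ((j:ℝ)+1) * SchwartzMap.seminorm ℝ k n
              (SchwartzMap.bilinLeftCLM (ContinuousLinearMap.lsmul ℝ ℝ).flip (hm j) χ)
            + SchwartzMap.seminorm ℝ k n
              (SchwartzMap.bilinLeftCLM (ContinuousLinearMap.lsmul ℝ ℝ).flip (hm (j+1))
                (fderivCLM ℝ E F ψ))
          ≤ (C1/c) * (((j:ℝ)+1+1)^(n+1) * c^(j+1)) + C2 * (((j:ℝ)+1+1)^(n+1) * c^(j+1)) :=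
            add_le_add t1 t2
        _ = (C1/c + C2) * (((j:ℝ)+1+1)^(n+1) * c^(j+1)) := by ring
        _ ≤ (SchwartzMap.seminorm ℝ k (n+1) ψ + (C1/c + C2)) * (((j:ℝ)+1+1)^(n+1) * c^(j+1)) := by
            apply mul_le_mul_of_nonneg_right _ hfin
            linarith
        _ = (SchwartzMap.seminorm ℝ k (n+1) ψ + (C1/c + C2)) * ((j:ℝ)+1+1)^(n+1) * c^(j+1) := by
            ring

end Aux2

/-- Multiplying a Schwartz function `φ` supported in `{|x| ≥ α + ε}` by the `j`-th power of the
multiplier `x ↦ (α² + r²)/(|x|² + r²)` yields again a Schwartz function `g_j`, and `g_j → 0`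
in the Schwartz topology as `j → ∞`, i.e. every Schwartz seminorm of `g_j` tends to `0`. -/
theorem schwartz_multiplier_tendsto_zero_outside (l : ℕ) (r α ε : ℝ)
    (hr : 0 < r) (hα : 0 ≤ α) (hε : 0 < ε)
    (φ : 𝓢(EuclideanSpace ℝ (Fin l), ℂ))
    (hsupp : tsupport ⇑φ ⊆ {x : EuclideanSpace ℝ (Fin l) | α + ε ≤ ‖x‖}) :
    ∃ g : ℕ → 𝓢(EuclideanSpace ℝ (Fin l), ℂ),
      (∀ (j : ℕ) (x : EuclideanSpace ℝ (Fin l)),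
        g j x = (((α ^ 2 + r ^ 2) / (‖x‖ ^ 2 + r ^ 2) : ℝ) : ℂ) ^ j * φ x) ∧
      ∀ k m : ℕ,
        Tendsto (fun j : ℕ => SchwartzMap.seminorm ℝ k m (g j)) atTop (nhds 0) := by
  set E := EuclideanSpace ℝ (Fin l)
  set mf : E → ℝ := fun x => (α ^ 2 + r ^ 2) / (‖x‖ ^ 2 + r ^ 2) with hmf_def
  have hA : (0:ℝ) < α ^ 2 + r ^ 2 := by positivity
  have hR : (0:ℝ) < r ^ 2 := by positivity
  have hmf : Function.HasTemperateGrowth mf := by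
    have h1 := my_htg_const_mul (inv_normsq_temperate (E := E) (r ^ 2) hR) (α ^ 2 + r ^ 2)
    have h2 : (fun x : E => (α ^ 2 + r ^ 2) * (‖x‖ ^ 2 + r ^ 2)⁻¹) = mf := by
      funext x; simp only [hmf_def]; rw [div_eq_mul_inv]
    rwa [h2] at h1
  have hm : ∀ j : ℕ, Function.HasTemperateGrowth (fun x : E => mf x ^ j) :=
    fun j => my_htg_pow hmf j
  have hdm : Function.HasTemperateGrowth (fderiv ℝ mf) := my_htg_fderiv hmf
  set S : Set E := {x : E | α + ε ≤ ‖x‖} with hS_def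
  set c : ℝ := (α ^ 2 + r ^ 2) / ((α + ε) ^ 2 + r ^ 2) with hc_def
  have hden : (0:ℝ) < (α + ε) ^ 2 + r ^ 2 := by positivity
  have hc0 : 0 < c := div_pos hA hden
  have hc1 : c < 1 := by
    rw [hc_def, div_lt_one hden]
    nlinarith
  have hmc : ∀ x ∈ S, |mf x| ≤ c := by
    intro x hx
    have hx' : α + ε ≤ ‖x‖ := hx
    have hmx : 0 < mf x := by
      rw [hmf_def]; positivity
    rw [abs_of_pos hmx]
    show (α ^ 2 + r ^ 2) / (‖x‖ ^ 2 + r ^ 2) ≤ (α ^ 2 + r ^ 2) / ((α + ε) ^ 2 + r ^ 2)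
    have hle : (α + ε) ^ 2 + r ^ 2 ≤ ‖x‖ ^ 2 + r ^ 2 := by
      have := pow_le_pow_left₀ (by linarith : (0:ℝ) ≤ α + ε) hx' 2
      linarith
    exact div_le_div_of_nonneg_left hA.le hden hle
  refine ⟨fun j => SchwartzMap.bilinLeftCLM (ContinuousLinearMap.lsmul ℝ ℝ).flip (hm j) φ,
    fun j x => ?_, fun k m => ?_⟩
  · have happ : (SchwartzMap.bilinLeftCLM (ContinuousLinearMap.lsmul ℝ ℝ).flip (hm j) φ) x
        = mf x ^ j • φ x := rfl
    rw [happ, Complex.real_smul, Complex.ofReal_pow]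
  · obtain ⟨C, hC0, hb⟩ := my_master mf hmf hm hdm S c hc0 hmc m k φ hsupp
    apply squeeze_zero (fun j => apply_nonneg _ _) hb
    have h1 : Tendsto (fun j : ℕ => ((j:ℝ))^m * c^j) atTop (nhds 0) :=
      (summable_pow_mul_geometric_of_norm_lt_one (R := ℝ) m
        (by rw [Real.norm_eq_abs, abs_of_pos hc0]; exact hc1)).tendsto_atTop_zero
    have h2 : Tendsto (fun j : ℕ => (((j+1:ℕ)):ℝ)^m * c^(j+1)) atTop (nhds 0) :=
      h1.comp (tendsto_add_atTop_nat 1)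
    have h3 := h2.const_mul (C/c)
    rw [mul_zero] at h3
    have heq : (fun j : ℕ => C * ((j:ℝ)+1)^m * c^j)
        = fun j : ℕ => (C/c) * ((((j+1:ℕ)):ℝ)^m * c^(j+1)) := by
      funext j
      push_cast
      rw [pow_succ]
      field_simp
    rw [heq]
    exact h3
end

section
/- Let α > 0 and let S be a tempered distribution on ℝˡ whose support is contained in the sphere {x ∈ ℝˡ : |x| = α}, i.e. ⟨S, φ⟩ = 0 for every Schwartz function φ whose support is disjoint from this sphere. Then there exists a nonnegative integer N such that (|x|² − α²)^{N+1} · S = 0, i.e. ⟨S, (|x|² − α²)^{N+1} φ(x)⟩ = 0 for every Schwartz function φ on ℝˡ. -/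
/-!
A tempered distribution `S` has finite order: `‖S f‖ ≤ C B` as soon as
`‖x‖ ^ k' * ‖D^{n'} f x‖ ≤ B` for all `k' ≤ k`, `n' ≤ N`. Split `P ^ (N + 1) φ` with the cut-off
`χ (P / ε)`, where `χ` is a bump equal to `1` near `0` and supported in `(-1, 1)`. The remainder
vanishes near `{P = 0}`, so `S` does not see it, while `P ^ (N + 1) χ (P / ε) φ` has all
derivatives of order `≤ N` of size `O(ε)` on the compact set `{|P| ≤ 1}`: each derivative of
`χ (· / ε)` costs a factor `ε⁻¹`, and `P ^ (N + 1)` gains `ε ^ (N + 1)` where `|P| < ε`.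
Hence `‖S (P ^ (N + 1) φ)‖ = O(ε)` for every `ε`, so it is `0`.
-/

open SchwartzMap Filter Topology
open scoped ContDiff

theorem eq_zero_of_forall_norm_le_mul {G : Type*} [NormedAddGroup G] {a : G} {c : ℝ}
    (h : ∀ ε, 0 < ε → ε ≤ 1 → ‖a‖ ≤ c * ε) : a = 0 := by
  have hlim : Tendsto (fun ε => c * ε) (𝓝[>] 0) (𝓝 0) := by
    simpa using ((continuous_const_mul c).tendsto 0).mono_left nhdsWithin_le_nhds
  refine norm_le_zero_iff.1 (ge_of_tendsto hlim ?_)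
  filter_upwards [Ioc_mem_nhdsGT one_pos] with ε hε using h ε hε.1 hε.2

theorem disjoint_tsupport_sub_comp_smul {X M : Type*} [TopologicalSpace X] [AddCommGroup M]
    [Module ℝ M] {u w : ℝ → ℝ} (h : u =ᶠ[𝓝 0] w) {P : X → ℝ}
    (hP : Continuous P) (φ : X → M) :
    Disjoint (tsupport fun x => (w (P x) - u (P x)) • φ x) (P ⁻¹' {0}) := by
  refine Set.disjoint_right.2 fun z hz => notMem_tsupport_iff_eventuallyEq.2 ?_
  have hPz : Tendsto P (𝓝 z) (𝓝 0) := hz ▸ hP.tendsto z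
  filter_upwards [hPz.eventually h] with x hx
  simp [hx]

section

variable {E F : Type*} [NormedAddCommGroup E] [NormedSpace ℝ E] [NormedAddCommGroup F]
  [NormedSpace ℝ F]

theorem ContinuousLinearMap.exists_schwartz_order_bound {G : Type*} [NormedAddCommGroup G]
    [NormedSpace ℝ G] (S : 𝓢(E, F) →L[ℝ] G) :
    ∃ k n : ℕ, ∃ C : ℝ, ∀ (f : 𝓢(E, F)) (B : ℝ),
      (∀ k' ≤ k, ∀ n' ≤ n, ∀ x, ‖x‖ ^ k' * ‖iteratedFDeriv ℝ n' f x‖ ≤ B) → ‖S f‖ ≤ C * B := by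
  obtain ⟨s, C, -, hC⟩ := Seminorm.bound_of_continuous (schwartz_withSeminorms ℝ E F)
    ((normSeminorm ℝ G).comp S.toLinearMap) (continuous_norm.comp S.continuous)
  refine ⟨s.sup Prod.fst, s.sup Prod.snd, C, fun f B hf => ?_⟩
  have hB : 0 ≤ B := (by positivity : (0 : ℝ) ≤ _).trans (hf 0 (Nat.zero_le _) 0 (Nat.zero_le _) 0)
  calc ‖S f‖ ≤ C * s.sup (schwartzSeminormFamily ℝ E F) f := hC f
    _ ≤ C * B := by
      gcongr
      refine Seminorm.finset_sup_apply_le hB fun m hm => seminorm_le_bound ℝ _ _ f hB fun x => ?_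
      exact hf _ (Finset.le_sup (f := Prod.fst) hm) _ (Finset.le_sup (f := Prod.snd) hm) x

theorem ContDiff.exists_norm_iteratedFDeriv_le_on {f : E → F} (hf : ContDiff ℝ ∞ f) {K : Set E}
    (hK : IsCompact K) (n : ℕ) : ∃ C, ∀ i ≤ n, ∀ x ∈ K, ‖iteratedFDeriv ℝ i f x‖ ≤ C := by
  have hcont : Continuous fun x => ∑ i ∈ Finset.range (n + 1), ‖iteratedFDeriv ℝ i f x‖ :=
    continuous_finsetSum _ fun i _ => (hf.continuous_iteratedFDeriv (mod_cast le_top)).norm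
  obtain ⟨C, hC⟩ := hK.exists_bound_of_continuousOn hcont.continuousOn
  refine ⟨C, fun i hi x hx => ?_⟩
  calc ‖iteratedFDeriv ℝ i f x‖
      ≤ ∑ j ∈ Finset.range (n + 1), ‖iteratedFDeriv ℝ j f x‖ :=
        Finset.single_le_sum (f := fun j => ‖iteratedFDeriv ℝ j f x‖) (fun j _ => norm_nonneg _)
          (Finset.mem_range.2 (by omega))
    _ ≤ C := (Real.le_norm_self _).trans (hC x hx)

theorem ContDiff.exists_norm_iteratedFDeriv_le_of_hasCompactSupport {f : E → F}
    (hsm : ContDiff ℝ ∞ f) (hf : HasCompactSupport f) (n : ℕ) :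
    ∃ C, 0 ≤ C ∧ ∀ i ≤ n, ∀ x, ‖iteratedFDeriv ℝ i f x‖ ≤ C := by
  obtain ⟨C, hC⟩ := hsm.exists_norm_iteratedFDeriv_le_on hf n
  refine ⟨max C 0, le_max_right _ _, fun i hi x => ?_⟩
  by_cases hx : x ∈ tsupport f
  · exact (hC i hi x hx).trans (le_max_left _ _)
  · rw [Function.notMem_support.1 fun h => hx (support_iteratedFDeriv_subset i h), norm_zero]
    exact le_max_right _ _

theorem ContDiff.exists_norm_iteratedFDeriv_comp_le {F' : Type*} [NormedAddCommGroup F']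
    [NormedSpace ℝ F'] {P : E → F'} (hP : ContDiff ℝ ∞ P) {K : Set E} (hK : IsCompact K) (n : ℕ) :
    ∃ A, 0 ≤ A ∧ ∀ u : F' → F, ContDiff ℝ ∞ u → ∀ B : ℝ,
      (∀ i ≤ n, ∀ t, ‖iteratedFDeriv ℝ i u t‖ ≤ B) →
      ∀ m ≤ n, ∀ x ∈ K, ‖iteratedFDeriv ℝ m (u ∘ P) x‖ ≤ A * B := by
  obtain ⟨D, hD⟩ := hP.exists_norm_iteratedFDeriv_le_on hK n
  set D' := max 1 D
  have hD' : 1 ≤ D' := le_max_left _ _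
  refine ⟨n.factorial * D' ^ n, by positivity, fun u hu B hB m hm x hx => ?_⟩
  have hB0 : 0 ≤ B := (norm_nonneg _).trans (hB 0 (Nat.zero_le _) (P x))
  have hPD : ∀ i, 1 ≤ i → i ≤ m → ‖iteratedFDeriv ℝ i P x‖ ≤ D' ^ i := fun i hi him =>
    ((hD i (him.trans hm) x hx).trans (le_max_right _ _)).trans (le_self_pow₀ hD' (by omega))
  calc ‖iteratedFDeriv ℝ m (u ∘ P) x‖
      ≤ m.factorial * B * D' ^ m :=
        norm_iteratedFDeriv_comp_le hu hP (mod_cast le_top) x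
          (fun i hi => hB i (hi.trans hm) (P x)) hPD
    _ ≤ n.factorial * B * D' ^ n := by
        gcongr
    _ = n.factorial * D' ^ n * B := by ring

theorem SchwartzMap.exists_norm_pow_mul_iteratedFDeriv_smul_le (φ : 𝓢(E, F)) {K : Set E}
    (hK : IsCompact K) (k n : ℕ) :
    ∃ A, ∀ v : E → ℝ, ContDiff ℝ ∞ v → tsupport v ⊆ K → ∀ B : ℝ, 0 ≤ B →
      (∀ i ≤ n, ∀ x ∈ K, ‖iteratedFDeriv ℝ i v x‖ ≤ B) →
      ∀ k' ≤ k, ∀ j ≤ n, ∀ x, ‖x‖ ^ k' * ‖iteratedFDeriv ℝ j (fun y => v y • φ y) x‖ ≤ A * B := by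
  obtain ⟨R, hR⟩ := hK.isBounded.subset_closedBall 0
  set R' := max 1 R
  set Mφ := ∑ i ∈ Finset.range (n + 1), SchwartzMap.seminorm ℝ 0 i φ
  have hMφ : ∀ i ≤ n, ∀ x, ‖iteratedFDeriv ℝ i φ x‖ ≤ Mφ := fun i hi x =>
    (norm_iteratedFDeriv_le_seminorm ℝ φ i x).trans <|
      Finset.single_le_sum (f := fun i => SchwartzMap.seminorm ℝ 0 i φ)
        (fun _ _ => apply_nonneg _ _) (Finset.mem_range.2 (by omega))
  have hMφ0 : 0 ≤ Mφ := Finset.sum_nonneg fun _ _ => apply_nonneg _ _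
  refine ⟨R' ^ k * 2 ^ n * Mφ, fun v hv hvK B hB hvB k' hk' j hj x => ?_⟩
  by_cases hx : x ∈ K
  · have hxR : ‖x‖ ≤ R' := (mem_closedBall_zero_iff.1 (hR hx)).trans (le_max_right _ _)
    have hsum : ∑ i ∈ Finset.range (j + 1), (j.choose i : ℝ) * ‖iteratedFDeriv ℝ i v x‖ *
        ‖iteratedFDeriv ℝ (j - i) φ x‖ ≤ 2 ^ j * (B * Mφ) := by
      calc _ ≤ ∑ i ∈ Finset.range (j + 1), (j.choose i : ℝ) * (B * Mφ) := by
            refine Finset.sum_le_sum fun i hi => ?_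
            have hi := Finset.mem_range.1 hi
            rw [← mul_assoc]
            gcongr
            · exact hvB i (by omega) x hx
            · exact hMφ _ (by omega) x
        _ = 2 ^ j * (B * Mφ) := by
            rw [← Finset.sum_mul, ← Nat.cast_sum, Nat.sum_range_choose, Nat.cast_pow,
              Nat.cast_ofNat]
    calc ‖x‖ ^ k' * ‖iteratedFDeriv ℝ j (fun y => v y • φ y) x‖
        ≤ R' ^ k * (2 ^ n * (B * Mφ)) := by
          gcongr
          · exact (pow_le_pow_left₀ (norm_nonneg x) hxR k').trans
              (pow_le_pow_right₀ (le_max_left _ _) hk')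
          · exact (norm_iteratedFDeriv_smul_le hv (φ.smooth ⊤) x (mod_cast le_top)).trans <|
              hsum.trans (by gcongr; norm_num)
      _ = R' ^ k * 2 ^ n * Mφ * B := by ring
  · have hx' : x ∉ tsupport fun y => v y • φ y := fun h =>
      hx (hvK (tsupport_smul_subset_left _ _ h))
    rw [Function.notMem_support.1 fun h => hx' (support_iteratedFDeriv_subset j h)]
    simp only [norm_zero, mul_zero]
    positivity

end

noncomputable def cutoffPow (χ : ℝ → ℝ) (N : ℕ) (ε t : ℝ) : ℝ := t ^ (N + 1) * χ (t / ε)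

section cutoffPow

variable {χ : ℝ → ℝ} {N : ℕ} {ε : ℝ}

theorem contDiff_cutoffPow (hχ : ContDiff ℝ ∞ χ) : ContDiff ℝ ∞ (cutoffPow χ N ε) :=
  (contDiff_id.pow _).mul (hχ.comp (contDiff_id.div_const ε))

theorem cutoffPow_eq_zero (hχ : ∀ s, 1 ≤ |s| → χ s = 0) (hε : 0 < ε) {t : ℝ} (ht : ε ≤ |t|) :
    cutoffPow χ N ε t = 0 := by
  rw [cutoffPow, hχ _ (by rwa [abs_div, abs_of_pos hε, one_le_div hε]), mul_zero]

theorem tsupport_cutoffPow_comp_subset {X : Type*} [TopologicalSpace X] {P : X → ℝ}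
    (hP : Continuous P) (hχ : ∀ s, 1 ≤ |s| → χ s = 0) (hε : 0 < ε) (hε1 : ε ≤ 1) :
    tsupport (cutoffPow χ N ε ∘ P) ⊆ {x | |P x| ≤ 1} := by
  refine closure_minimal (fun x hx => ?_) (isClosed_le (continuous_abs.comp hP) continuous_const)
  by_contra hPx
  exact hx (cutoffPow_eq_zero hχ hε (hε1.trans (not_le.1 hPx).le))

theorem cutoffPow_eventuallyEq (hχ : χ =ᶠ[𝓝 0] 1) (ε : ℝ) :
    cutoffPow χ N ε =ᶠ[𝓝 0] fun t => t ^ (N + 1) := by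
  have h : Tendsto (fun t : ℝ => t / ε) (𝓝 0) (𝓝 0) := by
    simpa using (continuous_id.div_const ε).tendsto 0
  filter_upwards [h.eventually hχ] with t ht
  simp [cutoffPow, ht]

theorem cutoffPow_eq_pow_mul_cutoffPow_one (hε : 0 < ε) (t : ℝ) :
    cutoffPow χ N ε t = ε ^ (N + 1) * cutoffPow χ N 1 (ε⁻¹ * t) := by
  rw [cutoffPow, cutoffPow, div_one, div_eq_inv_mul, mul_pow, ← mul_assoc, ← mul_assoc, ← mul_pow,
    mul_inv_cancel₀ hε.ne', one_pow, one_mul]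

theorem exists_norm_iteratedFDeriv_cutoffPow_le (hχ : ContDiff ℝ ∞ χ) (hχc : HasCompactSupport χ)
    (N : ℕ) : ∃ M, 0 ≤ M ∧ ∀ ε, 0 < ε → ε ≤ 1 → ∀ i ≤ N, ∀ t,
      ‖iteratedFDeriv ℝ i (cutoffPow χ N ε) t‖ ≤ M * ε := by
  have hH : HasCompactSupport (cutoffPow χ N 1) := by
    have h : cutoffPow χ N 1 = (fun t => t ^ (N + 1)) * χ := by
      funext t
      simp [cutoffPow]
    exact h ▸ hχc.mul_left
  obtain ⟨M, hM0, hM⟩ :=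
    (contDiff_cutoffPow hχ).exists_norm_iteratedFDeriv_le_of_hasCompactSupport hH N
  refine ⟨M, hM0, fun ε hε hε1 i hi t => ?_⟩
  have hscale : cutoffPow χ N ε = fun t => ε ^ (N + 1) * cutoffPow χ N 1 (ε⁻¹ * t) :=
    funext (cutoffPow_eq_pow_mul_cutoffPow_one hε)
  have hsm : ContDiff ℝ i (cutoffPow χ N 1) := (contDiff_cutoffPow hχ).of_le (mod_cast le_top)
  have hsm' : ContDiff ℝ i fun t => cutoffPow χ N 1 (ε⁻¹ * t) :=
    hsm.comp (contDiff_const.mul contDiff_id)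
  rw [norm_iteratedFDeriv_eq_norm_iteratedDeriv, hscale, iteratedDeriv_const_mul _ hsm'.contDiffAt,
    iteratedDeriv_comp_const_mul hsm, norm_mul, norm_mul,
    ← norm_iteratedFDeriv_eq_norm_iteratedDeriv]
  calc ‖ε ^ (N + 1)‖ * (‖ε⁻¹ ^ i‖ * ‖iteratedFDeriv ℝ i (cutoffPow χ N 1) (ε⁻¹ * t)‖)
      ≤ ε ^ (N + 1) * (ε⁻¹ ^ i * M) := by
        rw [norm_pow, norm_pow, Real.norm_of_nonneg hε.le, Real.norm_of_nonneg (inv_nonneg.2 hε.le)]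
        gcongr
        exact hM i hi _
    _ = ε ^ (N + 1 - i) * M := by
        rw [inv_pow, ← mul_assoc, ← div_eq_mul_inv, pow_sub₀ _ hε.ne' (by omega), div_eq_mul_inv]
    _ ≤ M * ε := by
        rw [mul_comm]
        gcongr
        exact pow_le_of_le_one hε.le hε1 (by omega)

end cutoffPow

theorem exists_pow_smul_eq_zero_of_vanishing_near_zeroSet {E F G : Type*} [NormedAddCommGroup E]
    [NormedSpace ℝ E] [NormedAddCommGroup F] [NormedSpace ℝ F] [NormedAddCommGroup G]
    [NormedSpace ℝ G] (S : 𝓢(E, F) →L[ℝ] G) {P : E → ℝ}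
    (hP : ContDiff ℝ ∞ P) (hK : IsCompact {x | |P x| ≤ 1})
    (hS : ∀ φ : 𝓢(E, F), Disjoint (tsupport φ) (P ⁻¹' {0}) → S φ = 0) :
    ∃ N : ℕ, ∀ φ ψ : 𝓢(E, F), (∀ x, ψ x = P x ^ (N + 1) • φ x) → S ψ = 0 := by
  obtain ⟨k, N, C, hSC⟩ := S.exists_schwartz_order_bound
  refine ⟨N, fun φ ψ hψ => ?_⟩
  let χ : ContDiffBump (0 : ℝ) := ⟨1 / 2, 1, by norm_num, by norm_num⟩
  have hχ : ∀ s, 1 ≤ |s| → χ s = 0 := fun s hs => χ.zero_of_le_dist (by simpa using hs)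
  obtain ⟨M, hM0, hM⟩ := exists_norm_iteratedFDeriv_cutoffPow_le χ.contDiff χ.hasCompactSupport N
  obtain ⟨A₁, hA₁0, hA₁⟩ := hP.exists_norm_iteratedFDeriv_comp_le (F := ℝ) hK N
  obtain ⟨A₂, hA₂⟩ := φ.exists_norm_pow_mul_iteratedFDeriv_smul_le hK k N
  refine eq_zero_of_forall_norm_le_mul (c := C * (A₂ * (A₁ * M))) fun ε hε hε1 => ?_
  set v := cutoffPow χ N ε ∘ P
  have hu : ContDiff ℝ ∞ (cutoffPow χ N ε) := contDiff_cutoffPow χ.contDiff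
  have hv : ContDiff ℝ ∞ v := hu.comp hP
  have hvK : tsupport v ⊆ {x | |P x| ≤ 1} :=
    tsupport_cutoffPow_comp_subset hP.continuous hχ hε hε1
  have hvc : HasCompactSupport v := hK.of_isClosed_subset (isClosed_tsupport v) hvK
  let g : 𝓢(E, F) :=
    hvc.smul_right.toSchwartzMap (f := fun x => v x • φ x) (hv.smul (φ.smooth ⊤))
  have hψg : ⇑(ψ - g) = fun x => (P x ^ (N + 1) - cutoffPow χ N ε (P x)) • φ x := by
    ext x
    simp [g, v, hψ, sub_smul]
  have hSψ : S ψ = S g := by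
    rw [← sub_eq_zero, ← map_sub]
    refine hS _ ?_
    rw [hψg]
    exact disjoint_tsupport_sub_comp_smul (cutoffPow_eventuallyEq χ.eventuallyEq_one ε)
      hP.continuous φ
  rw [hSψ, show C * (A₂ * (A₁ * M)) * ε = C * (A₂ * (A₁ * (M * ε))) by ring]
  exact hSC g _ (hA₂ v hv hvK _ (by positivity) (hA₁ _ hu _ (hM ε hε hε1)))

theorem annihilated_by_power_of_sphere_polynomial_general (l : ℕ) (α : ℝ)
    (S : 𝓢(EuclideanSpace ℝ (Fin l), ℂ) →L[ℂ] ℂ)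
    (hsupp : ∀ φ : 𝓢(EuclideanSpace ℝ (Fin l), ℂ),
      Disjoint (tsupport ⇑φ) {x : EuclideanSpace ℝ (Fin l) | ‖x‖ = α} → S φ = 0) :
    ∃ N : ℕ, ∀ φ ψ : 𝓢(EuclideanSpace ℝ (Fin l), ℂ),
      (∀ x : EuclideanSpace ℝ (Fin l),
        ψ x = ((‖x‖ ^ 2 - α ^ 2 : ℝ) : ℂ) ^ (N + 1) * φ x) →
      S ψ = 0 := by
  have hK : IsCompact {x : EuclideanSpace ℝ (Fin l) | |‖x‖ ^ 2 - α ^ 2| ≤ 1} := by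
    refine (isCompact_closedBall 0 (α ^ 2 + 2)).of_isClosed_subset
      (isClosed_le (by fun_prop) continuous_const) fun x (hx : |‖x‖ ^ 2 - α ^ 2| ≤ 1) => ?_
    rw [mem_closedBall_zero_iff]
    nlinarith [(abs_le.1 hx).2, sq_nonneg (‖x‖ - 1)]
  have hS : ∀ φ : 𝓢(EuclideanSpace ℝ (Fin l), ℂ),
      Disjoint (tsupport ⇑φ) ((fun x => ‖x‖ ^ 2 - α ^ 2) ⁻¹' {0}) → S.restrictScalars ℝ φ = 0 :=
    fun φ hφ => hsupp φ (hφ.mono_right fun x (hx : ‖x‖ = α) => by simp [hx])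
  obtain ⟨N, hN⟩ := exists_pow_smul_eq_zero_of_vanishing_near_zeroSet _
    ((contDiff_norm_sq ℝ).sub contDiff_const) hK hS
  exact ⟨N, fun φ ψ hψ => hN φ ψ fun x => by rw [hψ x, Complex.real_smul, Complex.ofReal_pow]⟩

/-- **Distributions supported in a sphere are annihilated by a power of `|x|² - α²`.**
If a tempered distribution `S` on `ℝˡ` is supported in the sphere `{x : |x| = α}` (i.e.
`⟨S, φ⟩ = 0` whenever the support of the Schwartz function `φ` is disjoint from the sphere),
then there is `N ≥ 0` with `(|x|² - α²)^{N+1} · S = 0`, i.e. `⟨S, (|x|² - α²)^{N+1} φ⟩ = 0`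
for every Schwartz function `φ`. -/
theorem annihilated_by_power_of_sphere_polynomial (l : ℕ) (α : ℝ) (hα : 0 < α)
    (S : 𝓢(EuclideanSpace ℝ (Fin l), ℂ) →L[ℂ] ℂ)
    (hsupp : ∀ φ : 𝓢(EuclideanSpace ℝ (Fin l), ℂ),
      Disjoint (tsupport ⇑φ) {x : EuclideanSpace ℝ (Fin l) | ‖x‖ = α} → S φ = 0) :
    ∃ N : ℕ, ∀ φ ψ : 𝓢(EuclideanSpace ℝ (Fin l), ℂ),
      (∀ x : EuclideanSpace ℝ (Fin l),
        ψ x = ((‖x‖ ^ 2 - α ^ 2 : ℝ) : ℂ) ^ (N + 1) * φ x) →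
      S ψ = 0 :=
  annihilated_by_power_of_sphere_polynomial_general l α S hsupp
end
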